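/- arXiv:1304.5264 — 7 statements merged into one kernel-verified Lean document; each statement's English description precedes it below -/
import Mathlib

section
/- For any finite set Y of points in the Boolean hypercube {0,1}^m with |Y| ≥ 1, the number of coordinates captured by Y is at most |Y| - 1, where a pair (x,y) captures coordinate j if j is the largest coordinate where x and y differ, and Y captures j if some pair of distinct points in Y captures j. -/
/-!
The position of the highest differing coordinate, `topDiff x y ∈ WithBot ι`, is an ultrametric
on `ι → β`. In an ultrametric space, adding a point `z` to `Y` creates at most one new distance:
if `y₀ ∈ Y` is closest to `z`, then every `y ∈ Y` farther from `z` than `y₀` satisfies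
`d z y = d y₀ y`. By induction, `n` points realise at most `n - 1` distinct nonzero distances.
-/

open Finset

section Ultrametric

variable {α Γ : Type*} [LinearOrder Γ] (d : α → α → Γ)

lemma image_dist_subset_insert_of_nearest (hsymm : ∀ x y, d x y = d y x)
    (hultra : ∀ x y z, d x z ≤ max (d x y) (d y z)) [DecidableEq Γ] {Y : Finset α} {z y₀ : α}
    (hy₀ : y₀ ∈ Y) (hmin : ∀ y ∈ Y, d z y₀ ≤ d z y) :
    Y.image (d z) ⊆ insert (d z y₀) (Y.offDiag.image fun p => d p.1 p.2) := by
  intro r hr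
  obtain ⟨y, hy, rfl⟩ := mem_image.1 hr
  rcases (hmin y hy).eq_or_lt with heq | hlt
  · exact heq ▸ mem_insert_self _ _
  have hle : d z y ≤ d y₀ y := by
    simpa [hlt.not_ge] using hultra z y₀ y
  have hge : d y₀ y ≤ d z y := by
    simpa [hsymm y₀ z, hlt.le] using hultra y₀ z y
  refine mem_insert_of_mem (mem_image.2 ⟨(y₀, y), ?_, le_antisymm hge hle⟩)
  exact mem_offDiag.2 ⟨hy₀, hy, fun h => hlt.ne (congrArg (d z) h)⟩

theorem card_image_offDiag_le_card_sub_one [DecidableEq α] [DecidableEq Γ]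
    (hsymm : ∀ x y, d x y = d y x) (hultra : ∀ x y z, d x z ≤ max (d x y) (d y z))
    (Y : Finset α) : (Y.offDiag.image fun p => d p.1 p.2).card ≤ Y.card - 1 := by
  induction Y using Finset.induction_on with
  | empty => simp
  | insert z Y hz ih =>
    rcases Y.eq_empty_or_nonempty with rfl | hne
    · simp
    obtain ⟨y₀, hy₀, hmin⟩ := Y.exists_min_image (d z) hne
    have hnew := image_dist_subset_insert_of_nearest d hsymm hultra hy₀ hmin
    have hsub : (insert z Y).offDiag.image (fun p => d p.1 p.2) ⊆
        insert (d z y₀) (Y.offDiag.image fun p => d p.1 p.2) := by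
      simp only [offDiag_insert hz, image_union, singleton_product, product_singleton,
        map_eq_image, image_image, Function.comp_def, Function.Embedding.coeFn_mk, ← hsymm z]
      exact union_subset (union_subset (subset_insert _ _) hnew) hnew
    calc _ ≤ (insert (d z y₀) (Y.offDiag.image fun p => d p.1 p.2)).card := card_le_card hsub
      _ ≤ (Y.offDiag.image fun p => d p.1 p.2).card + 1 := card_insert_le _ _
      _ ≤ (insert z Y).card - 1 := by
        rw [card_insert_of_notMem hz]
        have := hne.card_pos
        omega

end Ultrametric

section TopDiff

variable {ι β : Type*} [Fintype ι] [LinearOrder ι] [DecidableEq β]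

def topDiff (x y : ι → β) : WithBot ι :=
  (univ.filter fun i => x i ≠ y i).max

lemma topDiff_comm (x y : ι → β) : topDiff x y = topDiff y x := by
  simp only [topDiff, ne_comm]

lemma topDiff_le_max (x y z : ι → β) : topDiff x z ≤ max (topDiff x y) (topDiff y z) := by
  rw [topDiff, topDiff, topDiff, ← max_union]
  refine max_mono fun i hi => ?_
  simp only [mem_union, mem_filter, mem_univ, true_and] at hi ⊢
  by_contra! h
  exact hi (h.1.trans h.2)

lemma topDiff_eq_coe {x y : ι → β} {j : ι} (hj : x j ≠ y j) (hmax : ∀ i, x i ≠ y i → i ≤ j) :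
    topDiff x y = j :=
  le_antisymm (Finset.max_le fun i hi => WithBot.coe_le_coe.2 (hmax i (mem_filter.1 hi).2))
    (le_max (mem_filter.2 ⟨mem_univ j, hj⟩))

theorem ncard_topDiffs_le_card_sub_one (Y : Finset (ι → β)) :
    {j : ι | ∃ x ∈ Y, ∃ y ∈ Y, x ≠ y ∧ x j ≠ y j ∧
      ∀ i : ι, x i ≠ y i → i ≤ j}.ncard ≤ Y.card - 1 := by
  classical
  set S := {j : ι | ∃ x ∈ Y, ∃ y ∈ Y, x ≠ y ∧ x j ≠ y j ∧ ∀ i : ι, x i ≠ y i → i ≤ j}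
  have hS : ((↑) : ι → WithBot ι) '' S ⊆ ↑(Y.offDiag.image fun p => topDiff p.1 p.2) := by
    rintro _ ⟨j, ⟨x, hx, y, hy, hxy, hj, hmax⟩, rfl⟩
    exact mem_image.2 ⟨(x, y), mem_offDiag.2 ⟨hx, hy, hxy⟩, topDiff_eq_coe hj hmax⟩
  calc S.ncard = (((↑) : ι → WithBot ι) '' S).ncard :=
        (Set.ncard_image_of_injective S WithBot.coe_injective).symm
    _ ≤ (Y.offDiag.image fun p => topDiff p.1 p.2).card :=
        (Set.ncard_le_ncard hS (finite_toSet _)).trans (Set.ncard_coe_finset _).le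
    _ ≤ Y.card - 1 :=
        card_image_offDiag_le_card_sub_one topDiff topDiff_comm topDiff_le_max Y

end TopDiff

theorem stmt0_general {m : ℕ} (Y : Finset (Fin m → Bool)) :
    {j : Fin m | ∃ x ∈ Y, ∃ y ∈ Y, x ≠ y ∧ x j ≠ y j ∧
      ∀ i : Fin m, x i ≠ y i → i ≤ j}.ncard ≤ Y.card - 1 :=
  ncard_topDiffs_le_card_sub_one Y

/-- A set `Y` of points of the hypercube `{0,1}^m` captures at most `|Y| - 1` coordinates,
where a pair `(x,y)` of distinct points captures `j` if `j` is the largest coordinate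
where `x` and `y` differ. -/
theorem stmt0 {m : ℕ} (Y : Finset (Fin m → Bool)) (hY : Y.Nonempty) :
    {j : Fin m | ∃ x ∈ Y, ∃ y ∈ Y, x ≠ y ∧ x j ≠ y j ∧
      ∀ i : Fin m, x i ≠ y i → i ≤ j}.ncard ≤ Y.card - 1 :=
  stmt0_general Y
end

section
/- Let val(x) = Σ_{i=1}^m 2^{i-1} x_i for x ∈ {0,1}^m, and for j ∈ [m] define g_j(x) = 2·val(x) − 2^j − 1 if x_j = 1, and g_j(x) = 2·val(x) otherwise. Then for all x, y ∈ {0,1}^m, if val(x) < val(y) and g_j(x) > g_j(y), then the largest coordinate where x and y differ is j, moreover x_j = 0 and y_j = 1. -/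
/-!
Comparing `g j x > g j y` with `val x < val y` forces `x j = 0`, `y j = 1` and
`val y ≤ val x + 2^j`. Then `⌊val y / 2^j⌋` is odd and `⌊val x / 2^j⌋` equals it or is one
less, so both have the same quotient by `2^(j+1)`: the bits above `j` agree.
-/

def val {m : ℕ} (x : Fin m → Bool) : ℕ := ∑ i, if x i then 2 ^ (i : ℕ) else 0

/-- `g j x = 2·val x − 2·2^j − 1` if `x j = 1`, else `2·val x` (here coordinate `j` is
0-indexed with bit weight `2^j`, so twice the weight is `2^(j+1)`). -/
def g {m : ℕ} (j : Fin m) (x : Fin m → Bool) : ℤ :=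
  if x j then 2 * (val x : ℤ) - 2 ^ ((j : ℕ) + 1) - 1 else 2 * (val x : ℤ)

theorem val_succ {m : ℕ} (x : Fin (m + 1) → Bool) :
    val x = (x 0).toNat + 2 * val (Fin.tail x) := by
  rw [val, val, Fin.sum_univ_succ, Finset.mul_sum]
  congr 1
  · cases x 0 <;> rfl
  · refine Finset.sum_congr rfl fun i _ => ?_
    by_cases h : x i.succ <;> simp [Fin.tail, h, pow_succ, mul_comm]

theorem testBit_val {m : ℕ} (x : Fin m → Bool) (i : Fin m) : (val x).testBit i = x i := by
  induction m with
  | zero => exact i.elim0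
  | succ m ih =>
    have hb := Bool.toNat_le (x 0)
    rw [val_succ]
    cases i using Fin.cases with
    | zero => cases x 0 <;> simp [Nat.testBit_zero]
    | succ i =>
      rw [Fin.val_succ, Nat.testBit_succ,
        show ((x 0).toNat + 2 * val (Fin.tail x)) / 2 = val (Fin.tail x) by omega]
      exact ih (Fin.tail x) i

theorem Nat.div_two_pow_succ_eq_of_le_add_two_pow {a b j : ℕ}
    (hb : b.testBit j = true) (hab : a ≤ b) (hba : b ≤ a + 2 ^ j) :
    a / 2 ^ (j + 1) = b / 2 ^ (j + 1) := by
  rw [Nat.testBit_eq_decide_div_mod_eq, decide_eq_true_iff] at hb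
  have hle : a / 2 ^ j ≤ b / 2 ^ j := Nat.div_le_div_right hab
  have hle' : b / 2 ^ j ≤ a / 2 ^ j + 1 := by
    calc b / 2 ^ j ≤ (a + 2 ^ j) / 2 ^ j := Nat.div_le_div_right hba
      _ = a / 2 ^ j + 1 := Nat.add_div_right a (by positivity)
  rw [pow_succ, ← Nat.div_div_eq_div_mul, ← Nat.div_div_eq_div_mul]
  omega

theorem Nat.testBit_eq_of_le_add_two_pow {a b j i : ℕ}
    (hb : b.testBit j = true) (hab : a ≤ b) (hba : b ≤ a + 2 ^ j) (hji : j < i) :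
    a.testBit i = b.testBit i := by
  obtain ⟨k, rfl⟩ : ∃ k, i = k + (j + 1) := ⟨i - (j + 1), by omega⟩
  rw [← Nat.testBit_div_two_pow, ← Nat.testBit_div_two_pow,
    Nat.div_two_pow_succ_eq_of_le_add_two_pow hb hab hba]

theorem bits_and_val_le_of_g_gt {m : ℕ} {j : Fin m} {x y : Fin m → Bool}
    (hxy : val x < val y) (hg : g j y < g j x) :
    x j = false ∧ y j = true ∧ val y ≤ val x + 2 ^ (j : ℕ) := by
  have hpow : (2 : ℤ) ^ ((j : ℕ) + 1) = 2 * 2 ^ (j : ℕ) := pow_succ' 2 _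
  have hpos : (0 : ℤ) < 2 ^ (j : ℕ) := by positivity
  have hxy' : (val x : ℤ) < val y := by exact_mod_cast hxy
  unfold g at hg
  cases hx : x j <;> cases hy : y j <;>
    simp only [hx, hy, Bool.false_eq_true, if_true, if_false] at hg
  · omega
  · exact ⟨rfl, rfl, by zify; omega⟩
  · omega
  · omega

/-- If `val x < val y` but `g j x > g j y`, then `x j = 0`, `y j = 1`, and `j` is the
largest coordinate where `x` and `y` differ. -/
theorem stmt2 {m : ℕ} (j : Fin m) (x y : Fin m → Bool)
    (h1 : val x < val y) (h2 : g j x > g j y) :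
    x j = false ∧ y j = true ∧ ∀ i : Fin m, x i ≠ y i → i ≤ j := by
  obtain ⟨hx, hy, hle⟩ := bits_and_val_le_of_g_gt h1 h2
  refine ⟨hx, hy, fun i hi => le_of_not_gt fun hji => hi ?_⟩
  rw [← testBit_val x, ← testBit_val y]
  exact Nat.testBit_eq_of_le_add_two_pow (by rwa [testBit_val]) h1.le hle hji
end

section
/- With val and g_j as defined, if x, y ∈ {0,1}^m satisfy y_j = 0 or x_j = 1 (i.e., not both x_j = 0 and y_j = 1) and val(x) < val(y), then g_j(x) < g_j(y). -/
/-
`g j x` is `2 * val x` minus a penalty depending only on the bit `x j`, and the penalty is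
monotone in that bit. The hypothesis says `y j ≤ x j`, so `y` pays at most the penalty of `x`,
while `2 * val y > 2 * val x`.
-/

def bitPenalty (j : ℕ) (b : Bool) : ℤ := if b then 2 ^ (j + 1) + 1 else 0

theorem bitPenalty_mono (j : ℕ) : Monotone (bitPenalty j) := by
  intro a b hab
  cases a <;> cases b <;> simp_all [bitPenalty, Bool.le_iff_imp]
  positivity

theorem g_eq_two_mul_val_sub_bitPenalty {m : ℕ} (j : Fin m) (x : Fin m → Bool) :
    g j x = 2 * (val x : ℤ) - bitPenalty j (x j) := by
  unfold g bitPenalty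
  split_ifs <;> ring

theorem Bool.le_of_not_false_and_true {a b : Bool} (h : ¬ (a = false ∧ b = true)) : b ≤ a := by
  cases a <;> cases b <;> simp_all

/-- If it is not the case that `x j = 0` and `y j = 1`, and `val x < val y`,
then `g j x < g j y`. -/
theorem stmt3 {m : ℕ} (j : Fin m) (x y : Fin m → Bool)
    (hxy : ¬ (x j = false ∧ y j = true)) (h : val x < val y) :
    g j x < g j y := by
  have hpen : bitPenalty j (y j) ≤ bitPenalty j (x j) :=
    bitPenalty_mono j (Bool.le_of_not_false_and_true hxy)
  have hval : (val x : ℤ) < val y := by exact_mod_cast h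
  rw [g_eq_two_mul_val_sub_bitPenalty, g_eq_two_mul_val_sub_bitPenalty]
  omega
end

section
/- With val and g_j as defined, if x, y ∈ {0,1}^m satisfy x_j = 0, y_j = 1, val(x) < val(y), and there exists a coordinate i > j where x and y differ, then g_j(x) < g_j(y). -/
lemma val_lt {m : ℕ} (x : Fin m → Bool) : val x < 2 ^ m := by
  induction m with
  | zero => simp [val]
  | succ n ih =>
    have hih := ih (fun i => x i.castSucc)
    rw [val, Fin.sum_univ_castSucc]
    rw [val] at hih
    simp only [Fin.coe_castSucc, Fin.val_last]
    have hp : (2:ℕ) ^ (n+1) = 2 ^ n * 2 := pow_succ 2 n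
    split <;> omega

lemma testBit_val_s4 {m : ℕ} (x : Fin m → Bool) (k : ℕ) :
    (val x).testBit k = if h : k < m then x ⟨k, h⟩ else false := by
  induction m with
  | zero => simp [val]
  | succ n ih =>
    have hval : val x = 2 ^ n * (if x (Fin.last n) then 1 else 0)
        + val (fun i => x i.castSucc) := by
      rw [val, Fin.sum_univ_castSucc, val]
      simp only [Fin.coe_castSucc, Fin.val_last]
      split <;> ring
    rw [hval, Nat.testBit_two_pow_mul_add _ (val_lt _) k]
    by_cases hk : k < n
    · rw [if_pos hk, ih (fun i => x i.castSucc), dif_pos hk,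
        dif_pos (Nat.lt_succ_of_lt hk)]
      rfl
    · rw [if_neg hk]
      rcases Nat.lt_or_ge k (n+1) with hk1 | hk1
      · have hkn : k - n = 0 := by omega
        rw [hkn, dif_pos hk1]
        have hfin : (⟨k, hk1⟩ : Fin (n+1)) = Fin.last n := by
          ext; simp only [Fin.val_last]; omega
        rw [hfin]
        split <;> simp_all
      · rw [dif_neg (by omega)]
        split
        · exact Nat.testBit_eq_false_of_lt (Nat.one_lt_two_pow (by omega))
        · simp

lemma val_lt_val {m : ℕ} {x y : Fin m → Bool} (i : Fin m)
    (hxi : x i = false) (hyi : y i = true)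
    (hagree : ∀ k : Fin m, i < k → x k = y k) : val x < val y := by
  apply Nat.lt_of_testBit (i : ℕ)
  · rw [testBit_val_s4, dif_pos i.isLt]; simpa using hxi
  · rw [testBit_val_s4, dif_pos i.isLt]; simpa using hyi
  · intro k hk
    rw [testBit_val_s4, testBit_val_s4]
    split
    · next hkm => exact hagree ⟨k, hkm⟩ (by simpa [Fin.lt_def] using hk)
    · rfl

/-- If `x j = 0`, `y j = 1`, `val x < val y`, and `x` and `y` differ at some
coordinate `i > j`, then `g j x < g j y`. -/
theorem stmt4 {m : ℕ} (j : Fin m) (x y : Fin m → Bool)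
    (hx : x j = false) (hy : y j = true) (h : val x < val y)
    (hi : ∃ i : Fin m, j < i ∧ x i ≠ y i) :
    g j x < g j y := by
  obtain ⟨i0, hji0, hne0⟩ := hi
  -- take the largest differing coordinate
  set S : Finset (Fin m) := Finset.univ.filter (fun r => x r ≠ y r) with hS
  have hne : S.Nonempty := ⟨i0, by simp [hS, hne0]⟩
  set i : Fin m := S.max' hne with hidef
  have hiS : i ∈ S := S.max'_mem hne
  have hxyi : x i ≠ y i := by simpa [hS] using hiS
  have hji : j < i := lt_of_lt_of_le hji0 (S.le_max' i0 (by simp [hS, hne0]))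
  have hagree : ∀ k : Fin m, i < k → x k = y k := by
    intro k hk
    by_contra hne'
    exact absurd (S.le_max' k (by simp [hS, hne'])) (not_le.mpr hk)
  -- x i must be false
  have hxi : x i = false := by
    by_contra hxi
    have hxi' : x i = true := by simpa using hxi
    have hyi : y i = false := by
      cases hyv : y i
      · rfl
      · exact absurd (hxi'.trans hyv.symm) hxyi
    exact absurd (val_lt_val i hyi hxi' (fun k hk => (hagree k hk).symm)) (by omega)
  have hyi : y i = true := by
    cases hyv : y i
    · exact absurd (hxi.trans hyv.symm) hxyi
    · rfl
  -- the updated x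
  set x' : Fin m → Bool := Function.update x j true with hx'def
  have hvalx' : val x' = val x + 2 ^ (j : ℕ) := by
    rw [val, val, ← Finset.add_sum_erase _ _ (Finset.mem_univ j),
      ← Finset.add_sum_erase _ _ (Finset.mem_univ j)]
    have hsum : ∑ r ∈ Finset.univ.erase j, (if x' r then 2 ^ (r:ℕ) else 0)
        = ∑ r ∈ Finset.univ.erase j, (if x r then 2 ^ (r:ℕ) else 0) := by
      refine Finset.sum_congr rfl fun r hr => ?_
      rw [hx'def, Function.update_of_ne (Finset.ne_of_mem_erase hr)]
    rw [hsum, hx'def]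
    simp [hx]
    ring
  have hlt : val x' < val y := by
    refine val_lt_val i ?_ hyi ?_
    · rw [hx'def, Function.update_of_ne (Fin.ne_of_gt hji), hxi]
    · intro k hk
      rw [hx'def, Function.update_of_ne (Fin.ne_of_gt (lt_trans hji hk))]
      exact hagree k hk
  have hgap : val x + 2 ^ (j : ℕ) + 1 ≤ val y := by omega
  -- conclude
  rw [g, g, if_neg (by simp [hx]), if_pos hy]
  have hc : (val x : ℤ) + 2 ^ (j : ℕ) + 1 ≤ (val y : ℤ) := by exact_mod_cast hgap
  have hp : (2:ℤ) ^ ((j:ℕ) + 1) = 2 * 2 ^ (j:ℕ) := by ring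
  linarith
end

section
/- Fix j ∈ [m]. The set of pairs {(x, x ⊕ e_j) : x_j = 0} forms a perfect matching of {0,1}^m into 2^{m-1} pairs, and for each such pair (x, y) with y = x ⊕ e_j, we have val(x) < val(y) but g_j(x) > g_j(y), i.e., every such pair is a violation of monotonicity for g_j. -/
open Function
open scoped Finset

theorem card_filter_apply_eq {ι α : Type*} [Fintype ι] [DecidableEq ι] [Fintype α]
    [DecidableEq α] (i : ι) (a : α) :
    #{x : ι → α | x i = a} = Fintype.card α ^ (Fintype.card ι - 1) := by
  simpa using
    Fintype.card_filter_piFinset_const_eq_of_mem (Finset.univ : Finset α) i (Finset.mem_univ a)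

theorem existsUnique_update_eq {ι α : Type*} [DecidableEq ι] {y : ι → α} {i : ι} {a : α}
    (hy : y i = a) (b : α) : ∃! x : ι → α, x i = b ∧ y = update x i a := by
  refine ⟨update y i b, ⟨update_self i b y, ?_⟩, ?_⟩
  · rw [update_idem, ← hy, update_eq_self]
  · rintro x ⟨hx, rfl⟩
    rw [update_idem, ← hx, update_eq_self]

theorem val_update_true {m : ℕ} {x : Fin m → Bool} {j : Fin m} (hx : x j = false) :
    val (update x j true) = val x + 2 ^ (j : ℕ) := by
  have hterm : (fun i => if update x j true i then 2 ^ (i : ℕ) else 0) =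
      update (fun i => if x i then 2 ^ (i : ℕ) else 0) j (2 ^ (j : ℕ)) := by
    ext i
    rcases eq_or_ne i j with rfl | hi <;> simp [*]
  rw [val, hterm, Finset.sum_update_of_mem (Finset.mem_univ j), val,
    ← Finset.add_sum_erase _ _ (Finset.mem_univ j), hx]
  simp [add_comm, Finset.sdiff_singleton_eq_erase]

-- Setting bit `j` raises `2 * val` by `2 ^ (j + 1)`, which the correction term of `g j`
-- overcompensates by exactly `1`.
theorem g_update_true {m : ℕ} {x : Fin m → Bool} {j : Fin m} (hx : x j = false) :
    g j (update x j true) = g j x - 1 := by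
  simp only [g, hx, update_self, val_update_true hx]
  push_cast
  ring

/-- The pairs `(x, x ⊕ e_j)` over `x` with `x j = 0` form a perfect matching of
`{0,1}^m` into `2^(m-1)` pairs, each a monotonicity violation for `g j`. -/
theorem stmt7 {m : ℕ} (j : Fin m) :
    (Finset.univ.filter fun x : Fin m → Bool => x j = false).card = 2 ^ (m - 1) ∧
    (∀ y : Fin m → Bool, y j = true →
      ∃! x : Fin m → Bool, x j = false ∧ y = Function.update x j true) ∧
    (∀ x : Fin m → Bool, x j = false →
      val x < val (Function.update x j true) ∧
      g j (Function.update x j true) < g j x) := by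
  refine ⟨by simpa using card_filter_apply_eq j false,
    fun y hy => existsUnique_update_eq hy false, fun x hx => ?_⟩
  rw [val_update_true hx, g_update_true hx]
  exact ⟨Nat.lt_add_of_pos_right (by positivity), sub_one_lt _⟩
end

section
/- Define g_{j,k}: {0,1}^m → ℤ by g_{j,k}(x) = 2·val(x) − 2^j − 1 if x_j = 1 and x ∈ S_k, and g_{j,k}(x) = 2·val(x) otherwise, where j ≤ m' and S_k is a block as above. If val(x) < val(y) and g_{j,k}(x) > g_{j,k}(y), then x and y both lie in S_k, x_j = 0, y_j = 1, and j is the largest coordinate where x and y differ. -/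
/-- The block `S_k` (for `k = 1, …, 2^(m-m′)`): points `x` with
`val x ∈ [(k−1)·2^m′, k·2^m′)`. -/
def Sblock {m : ℕ} (m' k : ℕ) : Finset (Fin m → Bool) :=
  Finset.univ.filter fun x => (k - 1) * 2 ^ m' ≤ val x ∧ val x < k * 2 ^ m'

/-- `g_{j,k} x = 2·val x − 2·2^j − 1` if `x j = 1` and `x ∈ S_k`, else `2·val x`
(0-indexed coordinate `j` has bit weight `2^j`, so twice the weight is `2^(j+1)`). -/
def gjk {m : ℕ} (m' : ℕ) (j : Fin m) (k : ℕ) (x : Fin m → Bool) : ℤ :=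
  if x j = true ∧ x ∈ Sblock (m := m) m' k
  then 2 * (val x : ℤ) - 2 ^ ((j : ℕ) + 1) - 1 else 2 * (val x : ℤ)

/-! An inversion of `g_{j,k}` can only put `y` on the lowered branch and `x` on the plain one,
and then `val y ≤ val x + 2^j`. As bit `j` of `val y` is set, `val x` lies between `val y` with
that bit cleared and `val y`, so `val x` and `val y` agree above bit `j`. Since `j < m'` and
membership in `S_k` depends only on `val / 2^m'`, `x` lies in `S_k` with `y`; then `x_j = 0`,
and no bit above `j` differs. -/

namespace Nat

theorem testBit_sum_two_pow (s : Finset ℕ) (i : ℕ) :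
    (∑ k ∈ s, 2 ^ k).testBit i ↔ i ∈ s := by
  rw [← mem_bitIndices, ← List.mem_toFinset, Finset.toFinset_bitIndices_sum_two_pow]

theorem div_two_pow_eq_of_le {a b p q : ℕ} (h : a / 2 ^ p = b / 2 ^ p) (hpq : p ≤ q) :
    a / 2 ^ q = b / 2 ^ q := by
  rw [← Nat.add_sub_cancel' hpq, pow_add, ← Nat.div_div_eq_div_mul, ← Nat.div_div_eq_div_mul, h]

theorem testBit_eq_of_div_two_pow_eq {a b p i : ℕ} (h : a / 2 ^ p = b / 2 ^ p) (hi : p ≤ i) :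
    a.testBit i = b.testBit i := by
  rw [← Nat.sub_add_cancel hi, ← testBit_div_two_pow, ← testBit_div_two_pow, h]

theorem div_two_pow_succ_eq_of_lt_of_le_add {a b j : ℕ} (hb : b.testBit j = true) (hab : a < b)
    (hba : b ≤ a + 2 ^ j) : a / 2 ^ (j + 1) = b / 2 ^ (j + 1) := by
  have hmod : 2 ^ j ≤ b % 2 ^ (j + 1) := ge_two_pow_of_testBit (by simpa using hb)
  have hb_eq := Nat.div_add_mod b (2 ^ (j + 1))
  have hlt := Nat.mod_lt b (Nat.two_pow_pos (j + 1))
  rw [pow_succ] at hmod hb_eq hlt ⊢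
  apply Nat.div_eq_of_lt_le <;> nlinarith

end Nat

theorem mem_Sblock_iff_div {m m' k : ℕ} {x : Fin m → Bool} :
    x ∈ Sblock m' k ↔ k - 1 ≤ val x / 2 ^ m' ∧ val x / 2 ^ m' < k := by
  rw [Sblock, Finset.mem_filter, Nat.le_div_iff_mul_le (Nat.two_pow_pos m'),
    Nat.div_lt_iff_lt_mul (Nat.two_pow_pos m')]
  simp

theorem branches_of_gjk_inversion {m m' k : ℕ} {j : Fin m} {x y : Fin m → Bool}
    (hval : val x < val y) (hg : gjk m' j k y < gjk m' j k x) :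
    (y j = true ∧ y ∈ Sblock m' k) ∧ ¬(x j = true ∧ x ∈ Sblock m' k) ∧
      val y ≤ val x + 2 ^ (j : ℕ) := by
  have hval' : (val x : ℤ) < val y := by exact_mod_cast hval
  have hpow : (0 : ℤ) < 2 ^ (j : ℕ) := by positivity
  unfold gjk at hg
  split_ifs at hg with hy hx
  · linarith [pow_succ (2 : ℤ) j]
  · exact ⟨hy, hx, by zify; linarith [pow_succ (2 : ℤ) j]⟩
  all_goals linarith [pow_succ (2 : ℤ) j]

theorem stmt12_general {m : ℕ} (m' : ℕ) (j : Fin m) (k : ℕ) (hj : (j : ℕ) < m')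
    (x y : Fin m → Bool) (h1 : val x < val y) (h2 : gjk m' j k x > gjk m' j k y) :
    x ∈ Sblock (m := m) m' k ∧ y ∈ Sblock (m := m) m' k ∧
    x j = false ∧ y j = true ∧ ∀ i : Fin m, x i ≠ y i → i ≤ j := by
  obtain ⟨⟨hyj, hyS⟩, hx, hyx⟩ := branches_of_gjk_inversion h1 h2
  have hdiv : val x / 2 ^ ((j : ℕ) + 1) = val y / 2 ^ ((j : ℕ) + 1) :=
    Nat.div_two_pow_succ_eq_of_lt_of_le_add (by rwa [testBit_val]) h1 hyx
  have hxS : x ∈ Sblock m' k := by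
    rwa [mem_Sblock_iff_div, Nat.div_two_pow_eq_of_le hdiv hj, ← mem_Sblock_iff_div]
  have hxj : x j = false := by simpa [hxS] using hx
  refine ⟨hxS, hyS, hxj, hyj, fun i hi => ?_⟩
  by_contra! hij
  rw [← testBit_val x, ← testBit_val y, Nat.testBit_eq_of_div_two_pow_eq hdiv hij] at hi
  exact hi rfl

/-- If `val x < val y` but `g_{j,k} x > g_{j,k} y`, then `x` and `y` both lie in
`S_k`, `x j = 0`, `y j = 1`, and `j` is the largest coordinate where they differ. -/
theorem stmt12 {m : ℕ} (m' : ℕ) (j : Fin m) (k : ℕ) (hm : m' ≤ m) (hj : (j : ℕ) < m')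
    (x y : Fin m → Bool) (h1 : val x < val y) (h2 : gjk m' j k x > gjk m' j k y) :
    x ∈ Sblock (m := m) m' k ∧ y ∈ Sblock (m := m) m' k ∧
    x j = false ∧ y j = true ∧ ∀ i : Fin m, x i ≠ y i → i ≤ j :=
  stmt12_general m' j k hj x y h1 h2
end

section
/- In the inductive construction for the k-wise Ramsey theorem: if for every a ∈ ℕ and every infinite A ⊆ ℕ with a < min A there exists an infinite (k−1)-wise monochromatic subset of A for the shifted colorings col'_i(S) = col_{i+1}(S ∪ {a}), then there exists an infinite sequence a_0 < a_1 < ... and a color vector C ∈ (colors)^k such that for every i ∈ [k] and every i-element subset S of {a_0, a_1, ...}, col_i(S) = C_i on an infinite subsequence; in particular some infinite subset of {a_0, a_1, ...} is k-wise monochromatic. -/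
/-!
Build `a₀ < a₁ < ⋯` together with infinite sets `B₀ ⊇ B₁ ⊇ ⋯` such that `aₙ₊₁ ∈ Bₙ`, `aₙ < Bₙ`
and, for every `i < k`, the colour `col i (insert aₙ S)` of `S ⊆ Bₙ` with `#S = i` is a
constant `cₙ(i)`; each step is one application of the hypothesis. Since `aₘ ∈ Bₙ` for `m > n`,
a finite `S ⊆ {aₙ}` with least element `aₙ` has colour `col (#S - 1) S = cₙ(#S - 1)`.
By pigeonhole the finitely-valued colour vector `(cₙ(i))_{i<k}` is constant for infinitely
many `n`, and those `aₙ` form the required set.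
-/

open Set

theorem exists_seq_of_forall_exists {α : Type*} {P : α → Prop} {r : α → α → Prop} {x₀ : α}
    (h₀ : P x₀) (h : ∀ x, P x → ∃ y, P y ∧ r x y) :
    ∃ f : ℕ → α, (∀ n, P (f n)) ∧ ∀ n, r (f n) (f (n + 1)) := by
  choose g hgP hgr using h
  let f : ℕ → {x // P x} := fun n => Nat.rec ⟨x₀, h₀⟩ (fun _ x => ⟨g x x.2, hgP x x.2⟩) n
  exact ⟨fun n => (f n).1, fun n => (f n).2, fun n => hgr _ _⟩

theorem exists_infinite_fiber_of_finite_range {α β : Type*} [Infinite α] {f : α → β}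
    (hf : (range f).Finite) : ∃ y, (f ⁻¹' {y}).Infinite := by
  have := hf.to_subtype
  obtain ⟨⟨y, _⟩, hy⟩ := Finite.exists_infinite_fiber (rangeFactorization f)
  refine ⟨y, ?_⟩
  convert infinite_coe_iff.mp hy using 1
  ext x
  simp [rangeFactorization, Subtype.ext_iff]

theorem StrictMono.exists_erase_subset_image_Ioi {α β : Type*} [LinearOrder α]
    [LinearOrder β] {f : α → β} (hf : StrictMono f) {N : Set α} {S : Finset β}
    (hS : ↑S ⊆ f '' N) (hne : S.Nonempty) :
    ∃ n ∈ N, f n ∈ S ∧ ↑(S.erase (f n)) ⊆ f '' Ioi n := by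
  obtain ⟨n, hnN, hn⟩ := hS (S.min'_mem hne)
  refine ⟨n, hnN, hn ▸ S.min'_mem hne, fun x hx => ?_⟩
  obtain ⟨hxn, hxS⟩ := Finset.mem_erase.mp hx
  obtain ⟨p, -, rfl⟩ := hS hxS
  have hlt : f n < f p := hn ▸ lt_of_le_of_ne (S.min'_le _ hxS) (hn ▸ hxn.symm)
  exact ⟨p, hf.lt_iff_lt.mp hlt, rfl⟩

section Construction

variable {col : ℕ → Finset ℕ → ℕ} {k : ℕ}

def InsertHomogeneous (col : ℕ → Finset ℕ → ℕ) (k a : ℕ) (B : Set ℕ) : Prop :=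
  ∀ i < k, ∀ S T : Finset ℕ, ↑S ⊆ B → ↑T ⊆ B → S.card = i → T.card = i →
    col i (insert a S) = col i (insert a T)

theorem insertHomogeneous_of_succ {a : ℕ} {B : Set ℕ}
    (h : ∀ i, i + 1 < k → ∀ S T : Finset ℕ, ↑S ⊆ B → ↑T ⊆ B → S.card = i + 1 →
      T.card = i + 1 → col (i + 1) (insert a S) = col (i + 1) (insert a T)) :
    InsertHomogeneous col k a B := by
  rintro (_ | i) hi S T hSB hTB hS hT
  · rw [Finset.card_eq_zero.mp hS, Finset.card_eq_zero.mp hT]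
  · exact h i hi S T hSB hTB hS hT

theorem InsertHomogeneous.col_eq {a : ℕ} {B : Set ℕ} (h : InsertHomogeneous col k a B)
    {i : ℕ} (hi : i < k) {S T : Finset ℕ} (ha : a ∈ S) (hSB : ↑(S.erase a) ⊆ B)
    (hTB : ↑T ⊆ B) (hS : S.card = i + 1) (hT : T.card = i) :
    col i S = col i (insert a T) := by
  have hcard : (S.erase a).card = i := by rw [Finset.card_erase_of_mem ha, hS]; rfl
  rw [← h i hi _ T hSB hTB hcard hT, Finset.insert_erase ha]

structure IsRamseyChain (col : ℕ → Finset ℕ → ℕ) (k : ℕ) (a : ℕ → ℕ) (B : ℕ → Set ℕ) :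
    Prop where
  infinite (n : ℕ) : (B n).Infinite
  lt_of_mem (n : ℕ) : ∀ b ∈ B n, a n < b
  insertHomogeneous (n : ℕ) : InsertHomogeneous col k (a n) (B n)
  mem_succ (n : ℕ) : a (n + 1) ∈ B n
  succ_subset (n : ℕ) : B (n + 1) ⊆ B n

theorem exists_isRamseyChain
    (H : ∀ a : ℕ, ∀ A : Set ℕ, A.Infinite → (∀ b ∈ A, a < b) →
      ∃ B ⊆ A, B.Infinite ∧ InsertHomogeneous col k a B) :
    ∃ a B, IsRamseyChain col k a B := by
  have step (A : Set ℕ) (hA : A.Infinite) :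
      ∃ a ∈ A, ∃ B ⊆ A, B.Infinite ∧ (∀ b ∈ B, a < b) ∧ InsertHomogeneous col k a B := by
    obtain ⟨a, ha⟩ := hA.nonempty
    have hAa : (A ∩ Ioi a).Infinite := by
      simpa only [sdiff_eq, compl_Iic] using hA.sdiff (finite_Iic a)
    obtain ⟨B, hBA, hB, hhom⟩ := H a _ hAa fun b hb => hb.2
    exact ⟨a, ha, B, fun x hx => (hBA hx).1, hB, fun b hb => (hBA hb).2, hhom⟩
  let P : ℕ × Set ℕ → Prop := fun p =>
    p.2.Infinite ∧ (∀ b ∈ p.2, p.1 < b) ∧ InsertHomogeneous col k p.1 p.2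
  obtain ⟨a₀, -, B₀, -, h₀⟩ := step univ infinite_univ
  obtain ⟨f, hP, hr⟩ := exists_seq_of_forall_exists (P := P)
      (r := fun p q => q.1 ∈ p.2 ∧ q.2 ⊆ p.2) (x₀ := (a₀, B₀)) h₀ fun p hp => by
      obtain ⟨a, ha, B, hBA, hB⟩ := step p.2 hp.1
      exact ⟨(a, B), hB, ha, hBA⟩
  exact ⟨fun n => (f n).1, fun n => (f n).2,
    ⟨fun n => (hP n).1, fun n => (hP n).2.1, fun n => (hP n).2.2,
      fun n => (hr n).1, fun n => (hr n).2⟩⟩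

namespace IsRamseyChain

variable {a : ℕ → ℕ} {B : ℕ → Set ℕ}

theorem strictMono (h : IsRamseyChain col k a B) : StrictMono a :=
  strictMono_nat_of_lt_succ fun n => h.lt_of_mem n _ (h.mem_succ n)

theorem image_Ioi_subset (h : IsRamseyChain col k a B) (n : ℕ) : a '' Ioi n ⊆ B n := by
  rintro _ ⟨_ | m, hm, rfl⟩
  · exact absurd hm (Nat.not_lt_zero n)
  exact antitone_nat_of_succ_le h.succ_subset (Nat.lt_succ_iff.mp hm) (h.mem_succ m)

/-- `col i (insert (a n) S)` for some `S ⊆ B n` with `#S = i`; by `insertHomogeneous` the choice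
of `S` does not matter. -/
noncomputable def color (h : IsRamseyChain col k a B) (n i : ℕ) : ℕ :=
  col i (insert (a n) ((h.infinite n).exists_subset_card_eq i).choose)

theorem col_eq_color (h : IsRamseyChain col k a B) {n i : ℕ} (hi : i < k) {S : Finset ℕ}
    (hn : a n ∈ S) (hS : ↑(S.erase (a n)) ⊆ a '' Ioi n) (hcard : S.card = i + 1) :
    col i S = h.color n i :=
  have hT := ((h.infinite n).exists_subset_card_eq i).choose_spec
  (h.insertHomogeneous n).col_eq hi hn (hS.trans (h.image_Ioi_subset n)) hT.1 hcard hT.2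

theorem exists_infinite_color_eq (h : IsRamseyChain col k a B)
    (hfin : ∀ i, (range (col i)).Finite) :
    ∃ N : Set ℕ, N.Infinite ∧ ∃ C : ℕ → ℕ, ∀ n ∈ N, ∀ i < k, h.color n i = C i := by
  let v : ℕ → Fin k → ℕ := fun n i => h.color n i
  have hv : (range v).Finite := (Set.Finite.pi fun i : Fin k => hfin i).subset <| by
    rintro _ ⟨n, rfl⟩ i -
    exact ⟨_, rfl⟩
  obtain ⟨y, hy⟩ := exists_infinite_fiber_of_finite_range hv
  obtain ⟨n₀, hn₀⟩ := hy.nonempty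
  refine ⟨_, hy, h.color n₀, fun n hn i hi => ?_⟩
  exact congrFun (hn.trans hn₀.symm) ⟨i, hi⟩

end IsRamseyChain

end Construction

/-- The inductive step of the k-wise Ramsey construction: if for every `a` and every
infinite `A` with `a < min A` there is an infinite subset of `A` monochromatic for
all shifted colorings `S ↦ col (i+1) (insert a S)`, then there is an infinite strictly
increasing sequence `a`, a color vector `C`, and an infinite subset `X` of the range of
`a` on which `col i` is constantly `C i` on `(i+1)`-element subsets, for all `i < k`;
in particular `X` is k-wise monochromatic. -/
theorem stmt19 (k : ℕ) (col : ℕ → Finset ℕ → ℕ)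
    (hfin : ∀ i, (Set.range (col i)).Finite)
    (H : ∀ a : ℕ, ∀ A : Set ℕ, A.Infinite → (∀ b ∈ A, a < b) →
      ∃ B ⊆ A, B.Infinite ∧ ∀ i, i + 1 < k → ∀ S T : Finset ℕ,
        ↑S ⊆ B → ↑T ⊆ B → S.card = i + 1 → T.card = i + 1 →
        col (i + 1) (insert a S) = col (i + 1) (insert a T)) :
    ∃ a : ℕ → ℕ, StrictMono a ∧ ∃ C : ℕ → ℕ, ∃ X : Set ℕ,
      X ⊆ Set.range a ∧ X.Infinite ∧
      ∀ i < k, ∀ S : Finset ℕ, ↑S ⊆ X → S.card = i + 1 → col i S = C i := by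
  obtain ⟨a, B, h⟩ := exists_isRamseyChain fun a A hA hlt => by
    obtain ⟨B, hBA, hB, hhom⟩ := H a A hA hlt
    exact ⟨B, hBA, hB, insertHomogeneous_of_succ hhom⟩
  obtain ⟨N, hN, C, hC⟩ := h.exists_infinite_color_eq hfin
  refine ⟨a, h.strictMono, C, a '' N, image_subset_range a N,
    hN.image h.strictMono.injective.injOn, fun i hi S hSX hcard => ?_⟩
  obtain ⟨n, hnN, hnS, hS⟩ :=
    h.strictMono.exists_erase_subset_image_Ioi hSX (Finset.card_pos.mp (by omega))
  rw [h.col_eq_color hi hnS hS hcard, hC n hnN i hi]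
end
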